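/- Let 0 < α < β and τ > 0. There is a constant K independent of q and n such that (q^α; q)_n / (q^β; q)_n · q^{nτ} ≤ K (1+n)^{α-β} for all q ∈ (0,1) and n ∈ ℕ. -/

import Mathlib

/-!
Each factor obeys `1 - q^(α+k) ≤ (1 - q^(β+k)) · exp (-(β-α) q^(α+k) / (β+k))`, by concavity
of `x ↦ 1 - q^x`, so the ratio of the two products is at most `exp (-(β-α) S)` with
`S = ∑_{k<n} q^(α+k) / (β+k)`. Writing `q = e^(-s)`, the bound `q^(α+k) ≥ 1 - (β+k) s` shows
that the first `m` terms of `S` already contribute `log (1+m) - log (1+β) - m s`. Taking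
`m = min n ⌊1/s⌋`, the remaining loss `log ((1+n)/(1+m)) ≤ log (2ns)` is absorbed by
`q^(nτ) = e^(-nsτ)`.
-/

open Finset

/-- Real q-Pochhammer symbol. -/
noncomputable def qPochR (a q : ℝ) (n : ℕ) : ℝ := ∏ k ∈ range n, (1 - a * q ^ k)

open Real

lemma mul_one_sub_rpow_le {q x y : ℝ} (hq : 0 < q) (hx : 0 ≤ x) (hxy : x ≤ y) :
    x * (1 - q ^ y) ≤ y * (1 - q ^ x) := by
  rcases hx.eq_or_lt with rfl | hx
  · simp
  have hy : 0 < y := hx.trans_le hxy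
  have hconv := (convexOn_rpow_left hq).2 (Set.mem_univ 0) (Set.mem_univ y)
    (sub_nonneg.2 ((div_le_one hy).2 hxy)) (div_nonneg hx.le hy.le) (sub_add_cancel 1 (x / y))
  simp only [smul_eq_mul, mul_zero, zero_add, rpow_zero, div_mul_cancel₀ x hy.ne'] at hconv
  have := mul_le_mul_of_nonneg_left hconv hy.le
  field_simp at this
  linarith

lemma one_sub_rpow_le_mul_exp {q a b : ℝ} (hq0 : 0 < q) (hq1 : q ≤ 1) (ha : 0 ≤ a) (hab : a ≤ b) :
    1 - q ^ a ≤ (1 - q ^ b) * exp (-((b - a) * (q ^ a / b))) := by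
  have hb : 0 ≤ 1 - q ^ b := sub_nonneg.2 (rpow_le_one hq0.le hq1 (ha.trans hab))
  have hsplit : 1 - q ^ a = (1 - q ^ b) - q ^ a * (1 - q ^ (b - a)) := by
    rw [mul_one_sub, ← rpow_add hq0, add_sub_cancel]; ring
  have hgap : (1 - q ^ b) * ((b - a) * (q ^ a / b)) ≤ q ^ a * (1 - q ^ (b - a)) := by
    rw [← mul_div_assoc, ← mul_div_assoc]
    have hqba : 0 ≤ 1 - q ^ (b - a) := sub_nonneg.2 (rpow_le_one hq0.le hq1 (sub_nonneg.2 hab))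
    refine div_le_of_le_mul₀ (ha.trans hab) (mul_nonneg (rpow_nonneg hq0.le a) hqba) ?_
    have := mul_one_sub_rpow_le hq0 (sub_nonneg.2 hab) (sub_le_self b ha)
    nlinarith [rpow_nonneg hq0.le a]
  calc 1 - q ^ a ≤ (1 - q ^ b) * (1 - (b - a) * (q ^ a / b)) := by rw [hsplit]; linarith
    _ ≤ (1 - q ^ b) * exp (-((b - a) * (q ^ a / b))) := by gcongr; exact one_sub_le_exp_neg _

lemma qPochR_rpow {q : ℝ} (hq : 0 < q) (a : ℝ) (n : ℕ) :
    qPochR (q ^ a) q n = ∏ k ∈ range n, (1 - q ^ (a + k)) := by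
  refine prod_congr rfl fun k _ => ?_
  rw [rpow_add hq, rpow_natCast]

lemma qPochR_div_le_exp {q α β : ℝ} (hq0 : 0 < q) (hq1 : q ≤ 1) (hα : 0 ≤ α) (hαβ : α ≤ β)
    (n : ℕ) :
    qPochR (q ^ α) q n / qPochR (q ^ β) q n
      ≤ exp (-((β - α) * ∑ k ∈ range n, q ^ (α + k) / (β + k))) := by
  have hβ : 0 ≤ β := hα.trans hαβ
  rw [qPochR_rpow hq0, qPochR_rpow hq0, mul_sum, ← sum_neg_distrib, exp_sum]
  refine div_le_of_le_mul₀
    (prod_nonneg fun k _ => sub_nonneg.2 (rpow_le_one hq0.le hq1 (by positivity)))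
    (prod_nonneg fun k _ => (exp_pos _).le) ?_
  rw [← prod_mul_distrib]
  refine prod_le_prod (fun k _ => sub_nonneg.2 (rpow_le_one hq0.le hq1 (by positivity)))
    fun k _ => ?_
  rw [mul_comm (exp _), ← add_sub_add_right_eq_sub β α (k : ℝ)]
  exact one_sub_rpow_le_mul_exp hq0 hq1 (by positivity) (by gcongr)

lemma one_add_log_mul_le_rpow {q a b : ℝ} (hq0 : 0 < q) (hq1 : q ≤ 1) (hab : a ≤ b) :
    1 + log q * b ≤ q ^ a := by
  have : log q * b ≤ log q * a := mul_le_mul_of_nonpos_left hab (log_nonpos hq0.le hq1)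
  rw [rpow_def_of_pos hq0]
  linarith [add_one_le_exp (log q * a)]

lemma log_sub_log_le_sum_one_div {b : ℝ} (hb : 0 < b) (m : ℕ) :
    log (b + m) - log b ≤ ∑ k ∈ range m, 1 / (b + k) := by
  have hanti : AntitoneOn (fun x : ℝ => 1 / x) (Set.Icc b (b + m)) := fun x hx y _ hxy =>
    one_div_le_one_div_of_le (hb.trans_le hx.1) hxy
  rw [← log_div (by positivity) hb.ne', ← integral_one_div_of_pos hb (by positivity)]
  exact hanti.integral_le_sum

lemma log_one_add_sub_le_sum_one_div {b : ℝ} (hb : 0 < b) (m : ℕ) :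
    log (1 + m) - log (1 + b) ≤ ∑ k ∈ range m, 1 / (b + k) := by
  refine le_trans ?_ (log_sub_log_le_sum_one_div hb m)
  rw [← log_div (by positivity) (by positivity), ← log_div (by positivity) hb.ne']
  refine log_le_log (by positivity) ?_
  rw [div_le_div_iff₀ (by positivity) hb]
  nlinarith [m.cast_nonneg (α := ℝ)]

lemma log_one_add_sub_le_sum_rpow_div {q α β : ℝ} (hq0 : 0 < q) (hq1 : q ≤ 1) (hαβ : α ≤ β)
    (hβ : 0 < β) {m n : ℕ} (hmn : m ≤ n) :
    log (1 + m) - log (1 + β) + m * log q ≤ ∑ k ∈ range n, q ^ (α + k) / (β + k) := by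
  have hterm : ∀ k ∈ range m, 1 / (β + k) + log q ≤ q ^ (α + k) / (β + k) := fun k _ => by
    rw [div_add' _ _ _ (by positivity), div_le_div_iff_of_pos_right (by positivity)]
    exact one_add_log_mul_le_rpow hq0 hq1 (by gcongr)
  calc log (1 + m) - log (1 + β) + m * log q
      ≤ ∑ k ∈ range m, (1 / (β + k) + log q) := by
        rw [sum_add_distrib, sum_const, card_range, nsmul_eq_mul]
        gcongr
        exact log_one_add_sub_le_sum_one_div hβ m
    _ ≤ ∑ k ∈ range m, q ^ (α + k) / (β + k) := sum_le_sum hterm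
    _ ≤ ∑ k ∈ range n, q ^ (α + k) / (β + k) :=
        sum_le_sum_of_subset_of_nonneg (range_subset_range.2 hmn) fun k _ _ => by positivity

lemma exists_log_one_add_le (c : ℝ) (hc : 0 < c) :
    ∃ C, ∀ s : ℝ, 0 < s → ∀ n : ℕ, ∃ m ≤ n,
      log (1 + n) ≤ log (1 + m) - s * m + c * s * n + C := by
  refine ⟨max 1 (log (2 / c)), fun s hs n => ?_⟩
  have hfloor : s * ⌊s⁻¹⌋₊ ≤ 1 := by
    calc s * ⌊s⁻¹⌋₊ ≤ s * s⁻¹ := by gcongr; exact Nat.floor_le (by positivity)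
      _ = 1 := mul_inv_cancel₀ hs.ne'
  rcases le_or_gt n ⌊s⁻¹⌋₊ with hn | hn
  · refine ⟨n, le_rfl, ?_⟩
    have : s * n ≤ 1 := le_trans (by gcongr) hfloor
    have : 0 ≤ c * s * n := by positivity
    linarith [le_max_left 1 (log (2 / c))]
  · refine ⟨⌊s⁻¹⌋₊, hn.le, ?_⟩
    have hn1 : (1 : ℝ) ≤ n := by exact_mod_cast Nat.one_le_of_lt hn
    have hlogm : -log s ≤ log (1 + ⌊s⁻¹⌋₊) := by
      rw [← log_inv]
      exact log_le_log (by positivity) (by linarith [Nat.lt_floor_add_one s⁻¹])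
    -- `log (c x / 2) ≤ c x / 2 - 1` at `x = (1 + n) s ≤ 2 n s`
    have hlog : log (1 + n) + log s ≤ c * s * n + log (2 / c) - 1 := by
      rw [← log_mul (by positivity) hs.ne', show 2 / c = (c / 2)⁻¹ by field_simp, log_inv]
      have := log_le_sub_one_of_pos (show 0 < c / 2 * ((1 + n) * s) by positivity)
      rw [log_mul (by positivity) (by positivity)] at this
      have : c / 2 * ((1 + n) * s) ≤ c * s * n := by
        nlinarith [mul_nonneg (mul_pos hc hs).le (sub_nonneg.2 hn1)]
      linarith
    linarith [le_max_right 1 (log (2 / c))]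

/-- For `0 < α < β` and `τ > 0`, there is `K` with
`(q^α;q)_n/(q^β;q)_n · q^{nτ} ≤ K (1+n)^{α-β}` for all `q ∈ (0,1)`, `n ∈ ℕ`. -/
theorem qPoch_ratio_decay (α β τ : ℝ) (hα : 0 < α) (hαβ : α < β) (hτ : 0 < τ) :
    ∃ K : ℝ, ∀ q : ℝ, q ∈ Set.Ioo (0:ℝ) 1 → ∀ n : ℕ,
      qPochR (q ^ α) q n / qPochR (q ^ β) q n * q ^ ((n : ℝ) * τ)
        ≤ K * (1 + (n : ℝ)) ^ (α - β) := by
  have hδ : 0 < β - α := sub_pos.2 hαβ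
  obtain ⟨C, hC⟩ := exists_log_one_add_le (τ / (β - α)) (div_pos hτ hδ)
  refine ⟨exp ((β - α) * (log (1 + β) + C)), fun q ⟨hq0, hq1⟩ n => ?_⟩
  obtain ⟨m, hmn, hm⟩ := hC (-log q) (neg_pos.2 (log_neg hq0 hq1)) n
  have hS := log_one_add_sub_le_sum_rpow_div hq0 hq1.le hαβ.le (hα.trans hαβ) hmn
  calc qPochR (q ^ α) q n / qPochR (q ^ β) q n * q ^ ((n : ℝ) * τ)
      ≤ exp (-((β - α) * ∑ k ∈ range n, q ^ (α + k) / (β + k))) * exp (log q * (n * τ)) := by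
        rw [← rpow_def_of_pos hq0]
        gcongr
        exact qPochR_div_le_exp hq0 hq1.le hα.le hαβ.le n
    _ ≤ exp ((β - α) * (log (1 + β) + C)) * exp (log (1 + n) * (α - β)) := by
        rw [← exp_add, ← exp_add, exp_le_exp]
        have hτδ : (β - α) * (τ / (β - α)) = τ := mul_div_cancel₀ τ hδ.ne'
        linear_combination (β - α) * hm + (β - α) * hS - log q * n * hτδ
    _ = exp ((β - α) * (log (1 + β) + C)) * (1 + n) ^ (α - β) := by
        rw [rpow_def_of_pos (by positivity)]
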